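/- arXiv:2404.14201 — 4 statements merged into one kernel-verified Lean document; each statement's English description precedes it below -/
import Mathlib

section
/- Let M = ℤ^n and let u, u' ∈ M be primitive and linearly independent over ℤ. Then in the Laurent polynomial ring ℤ[M] (the group algebra of M over ℤ), the elements 1 - e^{-u} and 1 - e^{-u'} are relatively prime (have no common non-unit factor). -/
/-!
Since `u` is primitive, Bézout gives a functional `φ` on `M` with `φ u = 1`, so
`m ↦ m - φ m • u` is a projection of `M` with kernel `ℤ u`. Modulo `1 - e^u` the monomial `e^m`
only depends on `m` modulo `ℤ u`, hence the ring endomorphism of `ℤ[M]` induced by the projection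
has kernel exactly `(1 - e^u)`. As `ℤ[M]` is a domain, `1 - e^u` is prime, and it divides
`1 - e^v` only when `v ∈ ℤ u`; for `v = u'` this is excluded by linear independence.
-/

open AddMonoidAlgebra

theorem exists_dual_apply_eq_one_of_gcd_eq_one {R ι : Type*} [CommRing R] [IsBezout R]
    [NormalizedGCDMonoid R] [Fintype ι] {u : ι → R} (hu : Finset.univ.gcd u = 1) :
    ∃ φ : Module.Dual R (ι → R), φ u = 1 := by
  classical
  obtain ⟨g, hg⟩ := Finset.univ.gcd_eq_sum_mul u
  exact ⟨dotProductEquiv R ι g, by simpa [dotProduct, mul_comm, hu] using hg.symm⟩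

theorem LinearIndependent.notMem_zmultiples_of_pair {M : Type*} [AddCommGroup M] {x y : M}
    (h : LinearIndependent ℤ ![x, y]) : y ∉ AddSubgroup.zmultiples x := by
  rintro ⟨k, hk⟩
  have := LinearIndependent.pair_iff.mp h k (-1) (by rw [← hk, neg_one_smul, add_neg_cancel])
  exact absurd this.2 (by norm_num)

namespace Module.Dual

variable {M : Type*} [AddCommGroup M]

def projAlong (φ : Module.Dual ℤ M) (u : M) : M →+ M :=
  (LinearMap.id - φ.smulRight u).toAddMonoidHom

theorem projAlong_apply (φ : Module.Dual ℤ M) (u m : M) : φ.projAlong u m = m - φ m • u := rfl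

theorem projAlong_eq_zero_iff {φ : Module.Dual ℤ M} {u : M} (hφ : φ u = 1) {m : M} :
    φ.projAlong u m = 0 ↔ m ∈ AddSubgroup.zmultiples u := by
  rw [projAlong_apply, sub_eq_zero, AddSubgroup.mem_zmultiples_iff]
  constructor
  · exact fun h => ⟨φ m, h.symm⟩
  · rintro ⟨k, rfl⟩
    simp [hφ]

end Module.Dual

namespace AddMonoidAlgebra

variable {R M : Type*} [CommRing R] [AddCommGroup M]

theorem one_sub_single_eq_zero_iff [Nontrivial R] {v : M} :
    (1 - single v 1 : R[M]) = 0 ↔ v = 0 := by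
  rw [sub_eq_zero, one_def, single_left_inj one_ne_zero, eq_comm]

theorem map_single_zsmul_eq_one {S : Type*} [Semiring S] (g : R[M] →+* S) {u : M}
    (h : g (single u 1) = 1) (k : ℤ) : g (single (k • u) 1) = 1 := by
  let ψ := ((g : R[M] →* S).comp (of R M)).toHomUnits
  have hψ : ψ (.ofAdd (k • u)) = 1 := by
    rw [ofAdd_zsmul, map_zpow, show ψ (.ofAdd u) = 1 from Units.ext h, one_zpow]
  exact congrArg Units.val hψ

variable {φ : Module.Dual ℤ M} {u : M}

theorem mapDomainRingHom_projAlong_single (m : M) (r : R) :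
    mapDomainRingHom R (φ.projAlong u) (single m r) = single (φ.projAlong u m) r :=
  mapDomain_single

theorem ker_mapDomainRingHom_projAlong (hφ : φ u = 1) :
    RingHom.ker (mapDomainRingHom R (φ.projAlong u)) = Ideal.span {1 - single u 1} := by
  set I : Ideal R[M] := Ideal.span {1 - single u 1}
  set π := mapDomainRingHom R (φ.projAlong u)
  have hu : Ideal.Quotient.mk I (single u 1) = 1 :=
    (sub_eq_zero.mp (Ideal.Quotient.eq_zero_iff_mem.mpr (Ideal.mem_span_singleton_self _))).symm
  have hcomp : (Ideal.Quotient.mk I).comp π = Ideal.Quotient.mk I := by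
    refine ringHom_ext (fun b => by simp [π]) (fun m => ?_)
    have hsplit : single m (1 : R) = single (φ.projAlong u m) 1 * single (φ m • u) 1 := by
      rw [single_mul_single, Module.Dual.projAlong_apply, sub_add_cancel, mul_one]
    rw [RingHom.comp_apply, mapDomainRingHom_projAlong_single, hsplit, map_mul,
      map_single_zsmul_eq_one _ hu, mul_one]
  apply le_antisymm
  · intro x hx
    rw [← Ideal.Quotient.eq_zero_iff_mem, ← hcomp, RingHom.comp_apply, hx, map_zero]
  · rw [Ideal.span_le, Set.singleton_subset_iff, SetLike.mem_coe, RingHom.mem_ker, map_sub,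
      map_one, mapDomainRingHom_projAlong_single, Module.Dual.projAlong_apply, hφ, one_smul,
      sub_self, one_def, sub_self]

theorem one_sub_single_dvd_one_sub_single_iff [Nontrivial R] (hφ : φ u = 1) {v : M} :
    (1 - single u 1 : R[M]) ∣ 1 - single v 1 ↔ v ∈ AddSubgroup.zmultiples u := by
  rw [← Ideal.mem_span_singleton, ← ker_mapDomainRingHom_projAlong hφ, RingHom.mem_ker, map_sub,
    map_one, mapDomainRingHom_projAlong_single, one_sub_single_eq_zero_iff,
    Module.Dual.projAlong_eq_zero_iff hφ]

theorem prime_one_sub_single [IsDomain R[M]] [Nontrivial R] (hφ : φ u = 1) :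
    Prime (1 - single u 1 : R[M]) := by
  have hu : u ≠ 0 := by rintro rfl; simp at hφ
  rw [← Ideal.span_singleton_prime (one_sub_single_eq_zero_iff.not.mpr hu),
    ← ker_mapDomainRingHom_projAlong hφ]
  exact RingHom.ker_isPrime _

end AddMonoidAlgebra

theorem relatively_prime_euler_classes_general (n : ℕ) (u u' : Fin n → ℤ)
    (hu : Finset.univ.gcd u = 1)
    (hind : LinearIndependent ℤ ![u, u']) :
    ∀ d : AddMonoidAlgebra ℤ (Fin n → ℤ),
      d ∣ (1 - AddMonoidAlgebra.single (-u) (1 : ℤ)) →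
      d ∣ (1 - AddMonoidAlgebra.single (-u') (1 : ℤ)) →
      IsUnit d := by
  obtain ⟨φ, hφ⟩ := exists_dual_apply_eq_one_of_gcd_eq_one hu
  have hφ_neg : (-φ) (-u) = 1 := by rw [LinearMap.neg_apply, map_neg, neg_neg, hφ]
  have hu' : -u' ∉ AddSubgroup.zmultiples (-u) := by
    rw [AddSubgroup.zmultiples_neg, neg_mem_iff]
    exact hind.notMem_zmultiples_of_pair
  exact (prime_one_sub_single hφ_neg).irreducible.isRelPrime_iff_not_dvd.mpr
    ((one_sub_single_dvd_one_sub_single_iff hφ_neg).not.mpr hu')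

/-- In the Laurent polynomial ring ℤ[M] = ℤ[ℤⁿ], if u, u' ∈ M = ℤⁿ are
primitive (coordinate gcd equal to 1) and linearly independent over ℤ, then
1 - e^{-u} and 1 - e^{-u'} are relatively prime: every common divisor is a unit. -/
theorem relatively_prime_euler_classes (n : ℕ) (u u' : Fin n → ℤ)
    (hu : Finset.univ.gcd u = 1) (hu' : Finset.univ.gcd u' = 1)
    (hind : LinearIndependent ℤ ![u, u']) :
    ∀ d : AddMonoidAlgebra ℤ (Fin n → ℤ),
      d ∣ (1 - AddMonoidAlgebra.single (-u) (1 : ℤ)) →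
      d ∣ (1 - AddMonoidAlgebra.single (-u') (1 : ℤ)) →
      IsUnit d :=
  relatively_prime_euler_classes_general n u u' hu hind
end

section
/- Let Δ be a complete fan in N = ℤⁿ. For any cone τ ∈ Δ and any two maximal (n-dimensional) cones σ, σ' of Δ both containing τ as a face, there exists a finite sequence σ = σ₁, σ₂, …, σ_r = σ' of n-dimensional cones of Δ, each containing τ, such that σ_j ∩ σ_{j+1} is an (n−1)-dimensional cone for each j. -/
/-- The dimension of a cone: the dimension of its linear span. -/
noncomputable def coneDim (n : ℕ) (C : Set (Fin n → ℝ)) : ℕ :=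
  Module.finrank ℝ (Submodule.span ℝ C)

/-- `F` is a face of the cone `C`: it is cut out of `C` by a supporting linear form. -/
def IsFaceOf {n : ℕ} (F C : Set (Fin n → ℝ)) : Prop :=
  ∃ u : (Fin n → ℝ) →ₗ[ℝ] ℝ, (∀ x ∈ C, 0 ≤ u x) ∧ F = {x ∈ C | u x = 0}

/-- `C` is a rational polyhedral cone: the set of nonnegative real combinations of a
finite set of lattice points. -/
def IsRatPolyCone {n : ℕ} (C : Set (Fin n → ℝ)) : Prop :=
  ∃ s : Finset (Fin n → ℤ),
    C = {x | ∃ c : (Fin n → ℤ) → ℝ, (∀ w, 0 ≤ c w) ∧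
          x = ∑ w ∈ s, c w • (fun i => (w i : ℝ))}

/-- A fan in the lattice N = ℤⁿ: a finite collection of strongly convex rational
polyhedral cones, closed under taking faces, such that the intersection of any two
cones of the fan is a face of each. -/
structure Fan (n : ℕ) where
  cones : Set (Set (Fin n → ℝ))
  finite : cones.Finite
  poly : ∀ C ∈ cones, IsRatPolyCone C
  strongly_convex : ∀ C ∈ cones, ∀ x ∈ C, -x ∈ C → x = 0
  faces_mem : ∀ C ∈ cones, ∀ F, IsFaceOf F C → F ∈ cones
  inter_face : ∀ C ∈ cones, ∀ C' ∈ cones, IsFaceOf (C ∩ C') C ∧ IsFaceOf (C ∩ C') C'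

/-- A fan is complete if its support is all of N_ℝ. -/
def Fan.IsComplete {n : ℕ} (Δ : Fan n) : Prop := ⋃₀ Δ.cones = Set.univ

/-!
Let `p` be the sum of the generators of `τ`: a small ball around `p` meets only cones having `τ`
as a face. Join generic points of the interiors of `σ` and `σ'` inside this ball by a segment
missing the spans of all cones of codimension at least two. Every point of the segment lies in a
full-dimensional cone, which then has `τ` as a face; as the segment is connected and the cones
are closed (by the conic Carathéodory theorem), the full-dimensional cones met by the segment
form a chain from `σ` to `σ'` in which consecutive cones share a point of the segment. Two
distinct such cones intersect in a cone containing that point, hence of dimension exactly `n - 1`.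
-/

open Finset Module Set

section ConicHull

variable {E : Type*} [AddCommGroup E] [Module ℝ E]

def conicHull (s : Finset E) : Set E :=
  {x | ∃ c : E → ℝ, (∀ w ∈ s, 0 ≤ c w) ∧ ∑ w ∈ s, c w • w = x}

lemma mem_conicHull_of_mem {s : Finset E} {w : E} (hw : w ∈ s) : w ∈ conicHull s := by
  classical
  exact ⟨fun v => if v = w then 1 else 0, fun v _ => by positivity, by simp [hw]⟩

lemma sum_mem_conicHull (s : Finset E) : ∑ w ∈ s, w ∈ conicHull s :=
  ⟨fun _ => 1, fun _ _ => zero_le_one, by simp⟩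

lemma zero_mem_conicHull (s : Finset E) : (0 : E) ∈ conicHull s :=
  ⟨0, fun _ _ => le_rfl, by simp⟩

lemma conicHull_mono {s t : Finset E} (h : t ⊆ s) : conicHull t ⊆ conicHull s := by
  classical
  rintro _ ⟨c, hc, rfl⟩
  refine ⟨fun w => if w ∈ t then c w else 0, fun w _ => ?_, ?_⟩
  · dsimp only
    split_ifs with hw
    exacts [hc w hw, le_rfl]
  · simp_rw [ite_smul, zero_smul, sum_ite_mem, Finset.inter_eq_right.2 h]

lemma convex_conicHull (s : Finset E) : Convex ℝ (conicHull s) := by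
  rintro _ ⟨c, hc, rfl⟩ _ ⟨d, hd, rfl⟩ a b ha hb -
  refine ⟨a • c + b • d, fun w hw => ?_, ?_⟩
  · simp only [Pi.add_apply, Pi.smul_apply, smul_eq_mul]
    have := hc w hw; have := hd w hw; positivity
  · simp only [smul_sum, Pi.add_apply, Pi.smul_apply, add_smul, smul_smul, smul_eq_mul,
      sum_add_distrib]

lemma eq_zero_on_conicHull_of_map_sum_eq_zero {s : Finset E} {u : E →ₗ[ℝ] ℝ}
    (hu : ∀ x ∈ conicHull s, 0 ≤ u x) (h : u (∑ w ∈ s, w) = 0) :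
    ∀ x ∈ conicHull s, u x = 0 := by
  have hgen : ∀ w ∈ s, u w = 0 := by
    rw [map_sum] at h
    exact (sum_eq_zero_iff_of_nonneg fun w hw => hu w (mem_conicHull_of_mem hw)).1 h
  rintro _ ⟨c, -, rfl⟩
  simp only [map_sum, map_smul, smul_eq_mul]
  exact sum_eq_zero fun w hw => by rw [hgen w hw, mul_zero]

lemma exists_mem_conicHull_erase [DecidableEq E] {s : Finset E}
    (hs : ¬LinearIndepOn ℝ id (s : Set E)) {x : E} (hx : x ∈ conicHull s) :
    ∃ j ∈ s, x ∈ conicHull (s.erase j) := by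
  obtain ⟨c, hc, rfl⟩ := hx
  obtain ⟨g, hg, hpos⟩ : ∃ g : E → ℝ, ∑ w ∈ s, g w • w = 0 ∧ ∃ i ∈ s, 0 < g i := by
    obtain ⟨g, hg, i, his, hgi⟩ := by simpa [linearIndepOn_finset_iff] using hs
    rcases Ne.lt_or_gt hgi with hneg | hpos
    · exact ⟨-g, by simp [neg_smul, sum_neg_distrib, hg], i, his, by simpa using hneg⟩
    · exact ⟨g, hg, i, his, hpos⟩
  obtain ⟨j, hjpos, hjmin⟩ := (s.filter (0 < g ·)).exists_min_image (fun w => c w / g w)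
    (by simpa [Finset.Nonempty] using hpos)
  rw [mem_filter] at hjpos
  set k : E → ℝ := fun w => c w - c j / g j * g w
  have hkj : k j = 0 := by simp [k, hjpos.2.ne']
  refine ⟨j, hjpos.1, k, fun w hw => ?_, ?_⟩
  · have hcw := hc w (mem_of_mem_erase hw)
    rcases le_or_gt (g w) 0 with hgw | hgw
    · have := div_nonneg (hc j hjpos.1) hjpos.2.le
      simp only [k, sub_nonneg]; nlinarith
    · simpa [k, sub_nonneg, ← le_div_iff₀ hgw] using
        hjmin w (mem_filter.2 ⟨mem_of_mem_erase hw, hgw⟩)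
  · rw [sum_erase s (by rw [hkj, zero_smul])]
    simp only [k, sub_smul, mul_smul, sum_sub_distrib, ← smul_sum, hg, smul_zero, sub_zero]

lemma exists_linearIndepOn_subset_mem_conicHull {s : Finset E} {x : E} (hx : x ∈ conicHull s) :
    ∃ t ⊆ s, LinearIndepOn ℝ id (t : Set E) ∧ x ∈ conicHull t := by
  classical
  induction s using Finset.strongInduction with
  | H s ih =>
    by_cases hs : LinearIndepOn ℝ id (s : Set E)
    · exact ⟨s, subset_rfl, hs, hx⟩
    obtain ⟨j, hj, hxj⟩ := exists_mem_conicHull_erase hs hx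
    obtain ⟨t, hts, ht, hxt⟩ := ih _ (erase_ssubset hj) hxj
    exact ⟨t, hts.trans (erase_subset _ _), ht, hxt⟩

end ConicHull

section NormedSpace

variable {E : Type*} [NormedAddCommGroup E] [NormedSpace ℝ E]

lemma isClosed_conicHull_of_linearIndepOn {s : Finset E} (hs : LinearIndepOn ℝ id (s : Set E)) :
    IsClosed (conicHull s) := by
  classical
  set φ := Fintype.linearCombination ℝ (fun w : s => (w : E))
  have hφ : Function.Injective φ := linearIndependent_iff_injective_fintypeLinearCombination.1 hs
  have himage : conicHull s = φ '' Ici 0 := by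
    ext x
    simp only [conicHull, mem_ofPred_eq, mem_image, Set.mem_Ici, φ, Fintype.linearCombination_apply]
    constructor
    · rintro ⟨c, hc, rfl⟩
      exact ⟨fun w => c w, fun w => hc w w.2, sum_coe_sort s (fun w => c w • w)⟩
    · rintro ⟨c, hc, rfl⟩
      refine ⟨fun w => if h : w ∈ s then c ⟨w, h⟩ else 0,
        fun w hw => by simpa [hw] using hc ⟨w, hw⟩, ?_⟩
      rw [← sum_coe_sort s]
      exact sum_congr rfl fun w _ => by simp
  rw [himage]
  exact (LinearMap.isClosedEmbedding_of_injective (LinearMap.ker_eq_bot.2 hφ)).isClosedMap _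
    isClosed_Ici

lemma isClosed_conicHull (s : Finset E) : IsClosed (conicHull s) := by
  classical
  have : conicHull s =
      ⋃ t ∈ s.powerset.filter (fun t : Finset E => LinearIndepOn ℝ id (t : Set E)),
        conicHull t := by
    refine (Subset.antisymm (fun x hx => ?_) (iUnion₂_subset fun t ht => ?_))
    · obtain ⟨t, hts, ht, hxt⟩ := exists_linearIndepOn_subset_mem_conicHull hx
      exact mem_biUnion (by simpa using ⟨hts, ht⟩) hxt
    · exact conicHull_mono (mem_powerset.1 (mem_filter.1 ht).1)
  rw [this]
  exact isClosed_biUnion_finset fun t ht => isClosed_conicHull_of_linearIndepOn (mem_filter.1 ht).2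

lemma Convex.interior_inter_ball_nonempty [FiniteDimensional ℝ E] {C : Set E} (hC : Convex ℝ C)
    (h0 : (0 : E) ∈ C) (hspan : Submodule.span ℝ C = ⊤) {p : E} (hp : p ∈ C) {δ : ℝ} (hδ : 0 < δ) :
    (interior C ∩ Metric.ball p δ).Nonempty := by
  have hint : (interior C).Nonempty := by
    refine hC.interior_nonempty_iff_affineSpan_eq_top.2 ?_
    rw [AffineSubspace.affineSpan_eq_top_iff_vectorSpan_eq_top_of_nonempty ℝ E E ⟨0, h0⟩,
      vectorSpan_eq_span_vsub_set_right ℝ h0]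
    simpa using hspan
  have : p ∈ closure (interior C) := by
    rw [hC.closure_interior_eq_closure_of_nonempty_interior hint]
    exact subset_closure hp
  obtain ⟨q, hq, hpq⟩ := Metric.mem_closure_iff.1 this δ hδ
  exact ⟨q, hq, by rwa [Metric.mem_ball, dist_comm]⟩

lemma Submodule.dense_compl_of_ne_top {W : Submodule ℝ E} (hW : W ≠ ⊤) : Dense (W : Set E)ᶜ := by
  rw [← interior_eq_empty_iff_dense_compl]
  by_contra h
  exact hW (W.eq_top_of_nonempty_interior' (nonempty_iff_ne_empty.2 h))

lemma exists_mem_forall_notMem_of_ne_top [FiniteDimensional ℝ E] {ι : Type*} {I : Set ι}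
    (hI : I.Finite) {W : ι → Submodule ℝ E} (hW : ∀ i ∈ I, W i ≠ ⊤) {U : Set E} (hU : IsOpen U)
    (hUne : U.Nonempty) : ∃ x ∈ U, ∀ i ∈ I, x ∉ W i := by
  have hdense : Dense (⋂ i ∈ I, (W i : Set E)ᶜ) :=
    dense_biInter_of_isOpen (fun i _ => (W i).closed_of_finiteDimensional.isOpen_compl)
      hI.countable fun i hi => Submodule.dense_compl_of_ne_top (hW i hi)
  obtain ⟨x, hxU, hx⟩ := hdense.inter_open_nonempty U hU hUne
  exact ⟨x, hxU, fun i hi => mem_iInter₂.1 hx i hi⟩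

/-- Choose `x` off every `W i`, then `y` off every `W i ⊔ ℝ ∙ x`. -/
lemma exists_segment_disjoint_of_codim_two [FiniteDimensional ℝ E] {ι : Type*} {I : Set ι}
    (hI : I.Finite) {W : ι → Submodule ℝ E} (hW : ∀ i ∈ I, finrank ℝ (W i) + 2 ≤ finrank ℝ E)
    {U V : Set E} (hU : IsOpen U) (hUne : U.Nonempty) (hV : IsOpen V) (hVne : V.Nonempty) :
    ∃ x ∈ U, ∃ y ∈ V, ∀ i ∈ I, Disjoint (segment ℝ x y) (W i) := by
  have ne_top {W' : Submodule ℝ E} (h : finrank ℝ W' < finrank ℝ E) : W' ≠ ⊤ := by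
    rintro rfl; exact h.ne (finrank_top ℝ E)
  obtain ⟨x, hxU, hx⟩ := exists_mem_forall_notMem_of_ne_top hI
    (fun i hi => ne_top (by linarith [hW i hi])) hU hUne
  obtain ⟨y, hyV, hy⟩ := exists_mem_forall_notMem_of_ne_top hI (W := fun i => W i ⊔ ℝ ∙ x)
    (fun i hi => ne_top (by
      have := Submodule.finrank_add_le_finrank_add_finrank (W i) (ℝ ∙ x)
      have : finrank ℝ (ℝ ∙ x) ≤ 1 := (finrank_span_le_card ({x} : Set E)).trans (by simp)
      linarith [hW i hi])) hV hVne
  refine ⟨x, hxU, y, hyV, fun i hi => Set.disjoint_left.2 ?_⟩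
  rintro _ ⟨a, b, -, -, hab, rfl⟩ hz
  rcases eq_or_ne b 0 with rfl | hb
  · exact hx i hi (by simpa [show a = 1 by linarith] using hz)
  · refine hy i hi ?_
    have hyeq : y = b⁻¹ • (a • x + b • y) - (b⁻¹ * a) • x := by
      rw [smul_add, smul_smul, smul_smul, inv_mul_cancel₀ hb, one_smul, add_sub_cancel_left]
    rw [hyeq]
    exact sub_mem (Submodule.smul_mem _ _ (Submodule.mem_sup_left hz))
      (Submodule.smul_mem _ _ (Submodule.mem_sup_right (Submodule.mem_span_singleton_self x)))

end NormedSpace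

theorem IsPreconnected.reflTransGen_of_closed_cover {X ι : Type*} [TopologicalSpace X]
    {S : Set X} (hS : IsPreconnected S) {I : Set ι} (hI : I.Finite) {F : ι → Set X}
    (hF : ∀ i ∈ I, IsClosed (F i)) (hcover : S ⊆ ⋃ i ∈ I, F i) {a b : ι}
    (ha : a ∈ I) (haS : (S ∩ F a).Nonempty) (hb : b ∈ I) (hbS : (S ∩ F b).Nonempty) :
    Relation.ReflTransGen (fun i j => j ∈ I ∧ (S ∩ F i ∩ F j).Nonempty) a b := by
  set R := {i ∈ I | Relation.ReflTransGen (fun i j => j ∈ I ∧ (S ∩ F i ∩ F j).Nonempty) a i}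
  have hclosed : ∀ J ⊆ I, IsClosed (⋃ i ∈ J, F i) := fun J hJ =>
    (hI.subset hJ).isClosed_biUnion fun i hi => hF i (hJ hi)
  by_contra hab
  have hsplit : S ⊆ (⋃ i ∈ R, F i) ∪ ⋃ i ∈ I \ R, F i := fun z hz => by
    obtain ⟨i, hi, hzi⟩ := mem_iUnion₂.1 (hcover hz)
    by_cases hiR : i ∈ R
    exacts [Or.inl (mem_biUnion hiR hzi), Or.inr (mem_biUnion ⟨hi, hiR⟩ hzi)]
  obtain ⟨z, hzS, hzA, hzB⟩ := isPreconnected_closed_iff.1 hS _ _ (hclosed R fun i hi => hi.1)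
    (hclosed (I \ R) sdiff_subset) hsplit
    (haS.mono fun z hz => ⟨hz.1, mem_biUnion ⟨ha, .refl⟩ hz.2⟩)
    (hbS.mono fun z hz => ⟨hz.1, mem_biUnion ⟨hb, fun h => hab h.2⟩ hz.2⟩)
  obtain ⟨i, hiR, hzi⟩ := mem_iUnion₂.1 hzA
  obtain ⟨j, hjIR, hzj⟩ := mem_iUnion₂.1 hzB
  exact hjIR.2 ⟨hjIR.1, hiR.2.tail ⟨hjIR.1, z, ⟨hzS, hzi⟩, hzj⟩⟩

theorem Relation.ReflTransGen.exists_relSeries_ne {α : Type*} {r : α → α → Prop} {a b : α}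
    (h : Relation.ReflTransGen r a b) :
    ∃ q : RelSeries {e : α × α | r e.1 e.2 ∧ e.1 ≠ e.2}, q.head = a ∧ q.last = b := by
  induction h with
  | refl => exact ⟨RelSeries.singleton _ a, rfl, rfl⟩
  | @tail b c _ hbc ih =>
    obtain ⟨q, hqa, hqb⟩ := ih
    by_cases hbc' : b = c
    · exact ⟨q, hqa, hqb.trans hbc'⟩
    · exact ⟨q.snoc c (by rw [hqb]; exact ⟨hbc, hbc'⟩), by simpa using hqa, by simp⟩

lemma IsRatPolyCone.exists_eq_conicHull {n : ℕ} {C : Set (Fin n → ℝ)} (h : IsRatPolyCone C) :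
    ∃ s : Finset (Fin n → ℝ), C = conicHull s := by
  classical
  obtain ⟨s, rfl⟩ := h
  set ι : (Fin n → ℤ) → (Fin n → ℝ) := fun w i => (w i : ℝ)
  have hleft : Function.LeftInverse (fun v i => ⌊v i⌋) ι := fun w => by
    funext i; simp [ι]
  refine ⟨s.image ι, Set.ext fun x => ⟨?_, ?_⟩⟩
  · rintro ⟨c, hc, rfl⟩
    refine ⟨fun v => c fun i => ⌊v i⌋, fun v _ => hc _, ?_⟩
    rw [sum_image fun w _ w' _ h => hleft.injective h]
    exact sum_congr rfl fun w _ => congrArg (· • ι w) (congrArg c (hleft w))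
  · rintro ⟨c, hc, rfl⟩
    refine ⟨fun w => max (c (ι w)) 0, fun w => le_max_right _ _, ?_⟩
    rw [sum_image fun w _ w' _ h => hleft.injective h]
    exact sum_congr rfl fun w hw => by dsimp only; rw [max_eq_left (hc _ (mem_image_of_mem ι hw))]

lemma IsRatPolyCone.isClosed {n : ℕ} {C : Set (Fin n → ℝ)} (h : IsRatPolyCone C) :
    IsClosed C := by
  obtain ⟨s, rfl⟩ := h.exists_eq_conicHull
  exact isClosed_conicHull s

lemma IsFaceOf.subset {n : ℕ} {F C : Set (Fin n → ℝ)} (h : IsFaceOf F C) : F ⊆ C := by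
  obtain ⟨u, -, rfl⟩ := h
  exact sep_subset C _

lemma coneDim_le {n : ℕ} (C : Set (Fin n → ℝ)) : coneDim n C ≤ n :=
  (Submodule.finrank_le _).trans_eq (finrank_fin_fun ℝ)

lemma span_eq_top_of_coneDim_eq {n : ℕ} {C : Set (Fin n → ℝ)} (h : coneDim n C = n) :
    Submodule.span ℝ C = ⊤ :=
  Submodule.eq_top_of_finrank_eq (h.trans (finrank_fin_fun ℝ).symm)

lemma IsFaceOf.eq_of_coneDim_eq {n : ℕ} {F C : Set (Fin n → ℝ)} (hF : IsFaceOf F C)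
    (h : coneDim n F = n) : F = C := by
  obtain ⟨u, -, rfl⟩ := hF
  have hker : Submodule.span ℝ {x ∈ C | u x = 0} ≤ LinearMap.ker u :=
    Submodule.span_le.2 fun x hx => hx.2
  rw [span_eq_top_of_coneDim_eq h, top_le_iff, LinearMap.ker_eq_top] at hker
  simp [hker]

namespace Fan

variable {n : ℕ} (Δ : Fan n)

lemma isClosed_biUnion {𝒞 : Set (Set (Fin n → ℝ))} (h𝒞 : 𝒞 ⊆ Δ.cones) :
    IsClosed (⋃ C ∈ 𝒞, C) :=
  (Δ.finite.subset h𝒞).isClosed_biUnion fun C hC => (Δ.poly C (h𝒞 hC)).isClosed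

lemma isFaceOf_of_subset {τ C : Set (Fin n → ℝ)} (hτ : τ ∈ Δ.cones) (hC : C ∈ Δ.cones)
    (h : τ ⊆ C) : IsFaceOf τ C := by
  simpa [Set.inter_eq_left.2 h] using (Δ.inter_face τ hτ C hC).2

lemma isFaceOf_of_sum_mem {s : Finset (Fin n → ℝ)} {C : Set (Fin n → ℝ)}
    (hs : conicHull s ∈ Δ.cones) (hC : C ∈ Δ.cones) (hsum : ∑ w ∈ s, w ∈ C) :
    IsFaceOf (conicHull s) C := by
  obtain ⟨u, hu, heq⟩ := (Δ.inter_face _ hs C hC).1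
  have hu0 : u (∑ w ∈ s, w) = 0 := by
    have : ∑ w ∈ s, w ∈ conicHull s ∩ C := ⟨sum_mem_conicHull s, hsum⟩
    rw [heq] at this
    exact this.2
  refine Δ.isFaceOf_of_subset hs hC fun x hx => ?_
  have : x ∈ {x ∈ conicHull s | u x = 0} :=
    ⟨hx, eq_zero_on_conicHull_of_map_sum_eq_zero hu hu0 x hx⟩
  rw [← heq] at this
  exact this.2

lemma exists_ball_forall_mem (p : Fin n → ℝ) :
    ∃ δ > 0, ∀ C ∈ Δ.cones, (C ∩ Metric.ball p δ).Nonempty → p ∈ C := by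
  have hopen : IsOpen (⋃ C ∈ {C ∈ Δ.cones | p ∉ C}, C)ᶜ :=
    (Δ.isClosed_biUnion fun C hC => hC.1).isOpen_compl
  obtain ⟨δ, hδ, hball⟩ := Metric.isOpen_iff.1 hopen p (by simp)
  refine ⟨δ, hδ, fun C hC ⟨z, hzC, hz⟩ => ?_⟩
  by_contra hp
  exact hball hz (mem_biUnion ⟨hC, hp⟩ hzC)

/-- `p` is the sum of the generators of `τ`. -/
lemma exists_ball_isFaceOf {τ : Set (Fin n → ℝ)} (hτ : τ ∈ Δ.cones) :
    ∃ p ∈ τ, ∃ δ > 0, ∀ C ∈ Δ.cones, (C ∩ Metric.ball p δ).Nonempty → IsFaceOf τ C := by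
  obtain ⟨s, rfl⟩ := (Δ.poly τ hτ).exists_eq_conicHull
  obtain ⟨δ, hδ, hball⟩ := Δ.exists_ball_forall_mem (∑ w ∈ s, w)
  exact ⟨_, sum_mem_conicHull s, δ, hδ,
    fun C hC hne => Δ.isFaceOf_of_sum_mem hτ hC (hball C hC hne)⟩

lemma interior_inter_ball_nonempty {σ : Set (Fin n → ℝ)} (hσ : σ ∈ Δ.cones)
    (hdσ : coneDim n σ = n) {p : Fin n → ℝ} (hp : p ∈ σ) {δ : ℝ} (hδ : 0 < δ) :
    (interior σ ∩ Metric.ball p δ).Nonempty := by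
  obtain ⟨s, rfl⟩ := (Δ.poly σ hσ).exists_eq_conicHull
  exact (convex_conicHull s).interior_inter_ball_nonempty (zero_mem_conicHull s)
    (span_eq_top_of_coneDim_eq hdσ) hp hδ

lemma exists_coneDim_eq_mem (hc : Δ.IsComplete) (z : Fin n → ℝ) :
    ∃ C ∈ Δ.cones, coneDim n C = n ∧ z ∈ C := by
  -- the full-dimensional cones cover the dense set of points off the spans of the others
  have hclosed := Δ.isClosed_biUnion (𝒞 := {C ∈ Δ.cones | coneDim n C = n}) fun C hC => hC.1
  suffices z ∈ closure (⋃ C ∈ {C ∈ Δ.cones | coneDim n C = n}, C) by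
    obtain ⟨C, hC, hzC⟩ := mem_iUnion₂.1 (hclosed.closure_eq ▸ this)
    exact ⟨C, hC.1, hC.2, hzC⟩
  refine Metric.mem_closure_iff.2 fun ε hε => ?_
  obtain ⟨y, hy, hylow⟩ := exists_mem_forall_notMem_of_ne_top
    (I := {C ∈ Δ.cones | coneDim n C ≠ n}) (Δ.finite.subset fun C hC => hC.1)
    (W := Submodule.span ℝ) (fun C hC htop => hC.2 (by
      rw [coneDim, htop, finrank_top, finrank_fin_fun])) Metric.isOpen_ball
    ⟨z, Metric.mem_ball_self hε⟩
  obtain ⟨C, hC, hyC⟩ : y ∈ ⋃₀ Δ.cones := hc ▸ mem_univ y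
  have hdC : coneDim n C = n := by
    by_contra h
    exact hylow C ⟨hC, h⟩ (Submodule.subset_span hyC)
  exact ⟨y, mem_biUnion ⟨hC, hdC⟩ hyC, by rwa [← Metric.mem_ball']⟩

lemma coneDim_inter_eq_sub_one {C D : Set (Fin n → ℝ)} (hC : C ∈ Δ.cones) (hD : D ∈ Δ.cones)
    (hCD : C ≠ D) {z : Fin n → ℝ} (hz : z ∈ C ∩ D)
    (hgen : ∀ F ∈ Δ.cones, coneDim n F + 2 ≤ n → z ∉ Submodule.span ℝ F) :
    coneDim n (C ∩ D) = n - 1 := by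
  obtain ⟨hfC, hfD⟩ := Δ.inter_face C hC D hD
  have hlow : ¬coneDim n (C ∩ D) + 2 ≤ n := fun h =>
    hgen _ (Δ.faces_mem C hC _ hfC) h (Submodule.subset_span hz)
  have hfull : coneDim n (C ∩ D) ≠ n := fun h =>
    hCD ((hfC.eq_of_coneDim_eq h).symm.trans (hfD.eq_of_coneDim_eq h))
  have := coneDim_le (C ∩ D)
  omega

end Fan

/-- In a complete fan Δ in ℤⁿ, for any cone τ and any two n-dimensional
cones σ, σ' of Δ having τ as a face, there is a finite chain of n-dimensional cones
of Δ, all containing τ as a face, from σ to σ', in which consecutive cones intersect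
in an (n−1)-dimensional cone. -/
theorem complete_fan_strongly_connected_through_walls
    (n : ℕ) (Δ : Fan n) (hc : Δ.IsComplete)
    (τ : Set (Fin n → ℝ)) (hτ : τ ∈ Δ.cones)
    (σ σ' : Set (Fin n → ℝ)) (hσ : σ ∈ Δ.cones) (hσ' : σ' ∈ Δ.cones)
    (hdσ : coneDim n σ = n) (hdσ' : coneDim n σ' = n)
    (hfσ : IsFaceOf τ σ) (hfσ' : IsFaceOf τ σ') :
    ∃ (r : ℕ) (ch : Fin (r + 1) → Set (Fin n → ℝ)),
      ch 0 = σ ∧ ch (Fin.last r) = σ' ∧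
      (∀ t, ch t ∈ Δ.cones ∧ coneDim n (ch t) = n ∧ IsFaceOf τ (ch t)) ∧
      (∀ t : Fin r, coneDim n (ch t.castSucc ∩ ch t.succ) = n - 1) := by
  obtain ⟨p, hpτ, δ, hδ, hface⟩ := Δ.exists_ball_isFaceOf hτ
  set G := {C | C ∈ Δ.cones ∧ coneDim n C = n ∧ IsFaceOf τ C}
  obtain ⟨x, hx, y, hy, hxy⟩ := exists_segment_disjoint_of_codim_two
    (I := {C ∈ Δ.cones | coneDim n C + 2 ≤ n}) (Δ.finite.subset fun C hC => hC.1)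
    (W := Submodule.span ℝ) (fun C hC => by rw [finrank_fin_fun]; exact hC.2)
    (isOpen_interior.inter Metric.isOpen_ball)
    (Δ.interior_inter_ball_nonempty hσ hdσ (hfσ.subset hpτ) hδ)
    (isOpen_interior.inter Metric.isOpen_ball)
    (Δ.interior_inter_ball_nonempty hσ' hdσ' (hfσ'.subset hpτ) hδ)
  have hcover : segment ℝ x y ⊆ ⋃ C ∈ G, C := fun z hz => by
    obtain ⟨C, hC, hdC, hzC⟩ := Δ.exists_coneDim_eq_mem hc z
    have hzball := (convex_ball p δ).segment_subset hx.2 hy.2 hz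
    exact mem_biUnion ⟨hC, hdC, hface C hC ⟨z, hzC, hzball⟩⟩ hzC
  obtain ⟨q, rfl, rfl⟩ := ((convex_segment x y).isPreconnected.reflTransGen_of_closed_cover
    (Δ.finite.subset fun C hC => hC.1) (fun C hC => (Δ.poly C hC.1).isClosed) hcover
    ⟨hσ, hdσ, hfσ⟩ ⟨x, left_mem_segment ℝ x y, interior_subset hx.1⟩
    ⟨hσ', hdσ', hfσ'⟩ ⟨y, right_mem_segment ℝ x y, interior_subset hy.1⟩).exists_relSeries_ne
  have hG : ∀ t, q t ∈ G := Fin.cases ⟨hσ, hdσ, hfσ⟩ fun t => (q.step t).1.1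
  refine ⟨q.length, q, rfl, rfl, hG, fun t => ?_⟩
  obtain ⟨⟨-, z, ⟨hzS, hzC⟩, hzD⟩, hne⟩ := q.step t
  exact Δ.coneDim_inter_eq_sub_one (hG _).1 (hG _).1 hne ⟨hzC, hzD⟩ fun F hF hdF =>
    Set.disjoint_left.1 (hxy F ⟨hF, hdF⟩) hzS
end

section
/- Let Δ be a complete cellular fan in N = ℤⁿ, i.e., there is an ordering σ₁ < … < σ_m of the maximal cones and distinguished faces τ_i ⪯ σ_i such that τ_i ⊆ σ_j implies i ≤ j. Then if τ_i is a face of σ_i with τ_i ⊆ σ_j only for j ≥ i, the sets Z_i := the union over j ≥ i of the orbit-cone strata indexed by faces γ with τ_j ⊆ γ ⊆ σ_j form a decreasing chain: for each i, the collection {γ ∈ Δ : τ_j ⊆ γ ⊆ σ_j for some j ≥ i} is closed under passing to cones γ' ∈ Δ containing γ (i.e., defines a closed union of strata). -/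
theorem le_of_cell_subset_cell {α ι : Type*} [LE ι] {σ τ : ι → Set α}
    (hstar : ∀ i j, τ i ⊆ σ j → i ≤ j) {γ γ' : Set α} {j j' : ι}
    (hτγ : τ j ⊆ γ) (hγγ' : γ ⊆ γ') (hγ'σ : γ' ⊆ σ j') : j ≤ j' :=
  hstar j j' (hτγ.trans (hγγ'.trans hγ'σ))

theorem upward_union_of_cells_closed_general
    (n m : ℕ) (Δ : Set (Set (Fin n → ℝ)))
    (σ τ : Fin m → Set (Fin n → ℝ))
    (hpartition : ∀ γ ∈ Δ, ∃! j : Fin m, τ j ⊆ γ ∧ γ ⊆ σ j)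
    (hstar : ∀ i j : Fin m, τ i ⊆ σ j → i ≤ j) :
    ∀ i : Fin m, ∀ γ ∈ Δ, ∀ γ' ∈ Δ, γ ⊆ γ' →
      (∃ j : Fin m, i ≤ j ∧ τ j ⊆ γ ∧ γ ⊆ σ j) →
      ∃ j' : Fin m, i ≤ j' ∧ τ j' ⊆ γ' ∧ γ' ⊆ σ j' := by
  rintro i γ - γ' hγ' hγγ' ⟨j, hij, hτγ, -⟩
  obtain ⟨j', ⟨hτγ', hγ'σ⟩, -⟩ := hpartition γ' hγ'
  exact ⟨j', hij.trans (le_of_cell_subset_cell hstar hτγ hγγ' hγ'σ), hτγ', hγ'σ⟩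

/-- combinatorial shadow that the Z_i are closed: Suppose Δ is a
collection of cones (as sets), σ₁ < … < σ_m are maximal cones with distinguished
faces τ_i ⪯ σ_i such that every cone γ ∈ Δ lies in exactly one "cell"
{γ : τ_j ⊆ γ ⊆ σ_j}, and the (star) condition holds: τ_i ⊆ σ_j implies i ≤ j.
Then for each i, the index set {γ ∈ Δ : τ_j ⊆ γ ⊆ σ_j for some j ≥ i} is closed
under passing to cones γ' ∈ Δ containing γ; i.e. Z_i = ∪_{j ≥ i} Y_j is a closed
union of orbit strata. -/
theorem upward_union_of_cells_closed
    (n m : ℕ) (Δ : Set (Set (Fin n → ℝ)))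
    (σ τ : Fin m → Set (Fin n → ℝ))
    (hσΔ : ∀ j, σ j ∈ Δ) (hτσ : ∀ j, τ j ⊆ σ j)
    (hpartition : ∀ γ ∈ Δ, ∃! j : Fin m, τ j ⊆ γ ∧ γ ⊆ σ j)
    (hstar : ∀ i j : Fin m, τ i ⊆ σ j → i ≤ j) :
    ∀ i : Fin m, ∀ γ ∈ Δ, ∀ γ' ∈ Δ, γ ⊆ γ' →
      (∃ j : Fin m, i ≤ j ∧ τ j ⊆ γ ∧ γ ⊆ σ j) →
      ∃ j' : Fin m, i ≤ j' ∧ τ j' ⊆ γ' ∧ γ' ⊆ σ j' :=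
  upward_union_of_cells_closed_general n m Δ σ τ hpartition hstar
end

section
/- Let R be an integral domain and A ⊆ Rᵐ a subring defined by divisibility (GKM) conditions along a set E of pairs: A = {(a_i) : d_{ij} divides a_i − a_j for (i,j) ∈ E}, with d_{ij} ∈ R. Suppose for each index i there exist elements f_i ∈ A with (f_i)_i = c_i a nonzero element of R and (f_i)_l = 0 for l > i, and suppose for every a ∈ A and every i: if a_l = 0 for all l > i, then c_i divides a_i. Then every element of A is an R-linear combination of f₁,…,f_m; i.e., f₁,…,f_m generate A as an R-module. -/
/-!
Descending induction on the highest nonzero entry: if `a ∈ A` vanishes above `i`, then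
`f i i ∣ a i`, say `a i = f i i * q`, and `a - q • f i` lies in `A` and vanishes from `i` on,
because `f i` is triangular.
-/

open Submodule

def gkmSubmodule {R ι : Type*} [CommRing R] (E : Set (ι × ι)) (d : ι × ι → R) :
    Submodule R (ι → R) where
  carrier := {a | ∀ p ∈ E, d p ∣ a p.1 - a p.2}
  zero_mem' := by simp
  add_mem' {a b} ha hb p hp := by
    simpa only [Pi.add_apply, add_sub_add_comm] using dvd_add (ha p hp) (hb p hp)
  smul_mem' c a ha p hp := by
    simpa only [Pi.smul_apply, smul_eq_mul, ← mul_sub] using (ha p hp).mul_left c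

lemma exists_sub_smul_mem_eq_zero_of_le {R ι : Type*} [CommRing R] [PartialOrder ι]
    {A : Submodule R (ι → R)} {a b : ι → R} {i : ι} (ha : a ∈ A) (hb : b ∈ A)
    (hbtri : ∀ l, i < l → b l = 0) (hvan : ∀ l, i < l → a l = 0) (hdvd : b i ∣ a i) :
    ∃ q : R, a - q • b ∈ A ∧ ∀ l, i ≤ l → (a - q • b) l = 0 := by
  obtain ⟨q, hq⟩ := hdvd
  refine ⟨q, A.sub_mem ha (A.smul_mem q hb), fun l hil => ?_⟩
  rcases hil.eq_or_lt with rfl | hil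
  · simp [hq, mul_comm]
  · simp [hvan l hil, hbtri l hil]

section Triangular

variable {R : Type*} [CommRing R] {n : ℕ} {A : Submodule R (Fin n → R)}
  {f : Fin n → Fin n → R}

lemma mem_span_range_of_eq_zero_of_le (hfA : ∀ i, f i ∈ A)
    (htri : ∀ i l : Fin n, i < l → f i l = 0)
    (hdvd : ∀ a ∈ A, ∀ i : Fin n, (∀ l, i < l → a l = 0) → f i i ∣ a i) (k : ℕ) :
    ∀ a ∈ A, (∀ l : Fin n, k ≤ (l : ℕ) → a l = 0) → a ∈ span R (Set.range f) := by
  induction k with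
  | zero =>
    intro a _ hzero
    rw [show a = 0 from funext fun l => hzero l l.val.zero_le]
    exact zero_mem _
  | succ k ih =>
    intro a ha hvan
    by_cases hk : k < n
    · obtain ⟨q, hqA, hqvan⟩ :=
        exists_sub_smul_mem_eq_zero_of_le ha (hfA ⟨k, hk⟩) (htri ⟨k, hk⟩)
          (fun l hl => hvan l hl) (hdvd a ha ⟨k, hk⟩ fun l hl => hvan l hl)
      have hsub : a - q • f ⟨k, hk⟩ ∈ span R (Set.range f) := ih _ hqA fun l hl => hqvan l hl
      simpa using add_mem hsub (smul_mem _ q (subset_span (Set.mem_range_self ⟨k, hk⟩)))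
    · exact ih a ha fun l _ => hvan l (by omega)

lemma mem_span_range_of_triangular (hfA : ∀ i, f i ∈ A)
    (htri : ∀ i l : Fin n, i < l → f i l = 0)
    (hdvd : ∀ a ∈ A, ∀ i : Fin n, (∀ l, i < l → a l = 0) → f i i ∣ a i)
    {a : Fin n → R} (ha : a ∈ A) : a ∈ span R (Set.range f) :=
  mem_span_range_of_eq_zero_of_le hfA htri hdvd n a ha fun l hl => absurd l.isLt (by omega)

end Triangular

theorem gkm_triangular_elements_generate_general
    (R : Type) [CommRing R] (m : ℕ)
    (E : Set (Fin m × Fin m)) (d : Fin m × Fin m → R)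
    (A : Set (Fin m → R))
    (hA : A = {a | ∀ p ∈ E, d p ∣ a p.1 - a p.2})
    (f : Fin m → (Fin m → R))
    (hfA : ∀ i, f i ∈ A)
    (htri : ∀ i l : Fin m, i < l → f i l = 0)
    (hdvd : ∀ a ∈ A, ∀ i : Fin m, (∀ l, i < l → a l = 0) → f i i ∣ a i) :
    ∀ a ∈ A, ∃ coef : Fin m → R, a = ∑ i, coef i • f i := by
  subst hA
  intro a ha
  obtain ⟨coef, hcoef⟩ := mem_span_range_iff_exists_fun R |>.mp <|
    mem_span_range_of_triangular (A := gkmSubmodule E d) hfA htri hdvd ha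
  exact ⟨coef, hcoef.symm⟩

/-- Let A ⊆ Rᵐ be defined by GKM divisibility conditions over an
integral domain R. If there are triangular elements f_i ∈ A with (f_i)_i = c_i ≠ 0
and (f_i)_l = 0 for l > i, and every a ∈ A vanishing above level i has a_i divisible
by c_i, then f₁,…,f_m generate A as an R-module. -/
theorem gkm_triangular_elements_generate
    (R : Type) [CommRing R] [IsDomain R] (m : ℕ)
    (E : Set (Fin m × Fin m)) (d : Fin m × Fin m → R)
    (A : Set (Fin m → R))
    (hA : A = {a | ∀ p ∈ E, d p ∣ a p.1 - a p.2})
    (f : Fin m → (Fin m → R))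
    (hfA : ∀ i, f i ∈ A)
    (hdiag : ∀ i, f i i ≠ 0)
    (htri : ∀ i l : Fin m, i < l → f i l = 0)
    (hdvd : ∀ a ∈ A, ∀ i : Fin m, (∀ l, i < l → a l = 0) → f i i ∣ a i) :
    ∀ a ∈ A, ∃ coef : Fin m → R, a = ∑ i, coef i • f i :=
  gkm_triangular_elements_generate_general R m E d A hA f hfA htri hdvd
end
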